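/- Let ε ∈ (0,1). Then the function F(t) = log(π/(ε + arccos t)) has a power series expansion F(t) = a_0 + Σ_{k≥1} a_k t^k valid for |t| < 1 in which every coefficient a_k with k ≥ 1 is strictly positive. -/

import Mathlib

/-!
With `c = ε + π / 2` we have `ε + arccos t = c - arcsin t`, and since `|arcsin t| ≤ π / 2 < c`,
`F(t) = log (π / c) + ∑_{n ≥ 1} (arcsin t) ^ n / (n c ^ n)`. The Taylor series of `arcsin`,
obtained by integrating the binomial series of `(1 - s²)^(-1/2)`, has nonnegative coefficients,
no constant term and linear coefficient `1`; hence `(arcsin t) ^ n` has nonnegative coefficients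
and `t ^ n`-coefficient `1`. Everything converges absolutely for `|t| < 1`, so the double series
may be regrouped by powers of `t`, and the coefficient of `t ^ k` contains the term `1 / (k c ^ k)`.
-/

open Real Set Finset PowerSeries intervalIntegral

namespace PowerSeries

lemma coeff_pow_nonneg {R : Type*} [CommSemiring R] [PartialOrder R] [IsOrderedRing R]
    {p : R⟦X⟧} (hp : ∀ k, 0 ≤ coeff k p) (n k : ℕ) : 0 ≤ coeff k (p ^ n) := by
  induction n generalizing k with
  | zero => rw [pow_zero, coeff_one]; split_ifs <;> simp
  | succ n ih =>
    rw [pow_succ, coeff_mul]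
    exact sum_nonneg fun ij _ ↦ mul_nonneg (ih _) (hp _)

lemma coeff_self_pow_of_constantCoeff_eq_zero {R : Type*} [CommSemiring R] {p : R⟦X⟧}
    (hp : constantCoeff p = 0) (n : ℕ) : coeff n (p ^ n) = coeff 1 p ^ n := by
  obtain ⟨q, rfl⟩ := X_dvd_iff.mpr hp
  rw [mul_pow, coeff_X_pow_mul', if_pos le_rfl, Nat.sub_self, coeff_zero_eq_constantCoeff_apply,
    map_pow, coeff_succ_X_mul, coeff_zero_eq_constantCoeff_apply]

variable {p q : ℝ⟦X⟧} {t : ℝ}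

lemma hasSum_coeff_mul_mul_pow (hp : Summable fun k ↦ ‖coeff k p * t ^ k‖)
    (hq : Summable fun k ↦ ‖coeff k q * t ^ k‖) :
    HasSum (fun k ↦ coeff k (p * q) * t ^ k)
      ((∑' k, coeff k p * t ^ k) * ∑' k, coeff k q * t ^ k) := by
  have cauchy (k : ℕ) : coeff k (p * q) * t ^ k =
      ∑ ij ∈ antidiagonal k, coeff ij.1 p * t ^ ij.1 * (coeff ij.2 q * t ^ ij.2) := by
    rw [coeff_mul, sum_mul]
    refine sum_congr rfl fun ij hij ↦ ?_
    rw [← mem_antidiagonal.mp hij, pow_add]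
    ring
  simp_rw [cauchy]
  rw [tsum_mul_tsum_eq_tsum_sum_antidiagonal_of_summable_norm hp hq]
  exact (summable_norm_sum_mul_antidiagonal_of_summable_norm hp hq).of_norm.hasSum

lemma summable_norm_coeff_mul_pow (hp : ∀ k, 0 ≤ coeff k p)
    (hs : Summable fun k ↦ coeff k p * |t| ^ k) : Summable fun k ↦ ‖coeff k p * t ^ k‖ := by
  simpa only [norm_mul, norm_pow, Real.norm_eq_abs, abs_of_nonneg (hp _)] using hs

lemma hasSum_coeff_pow_mul_pow (hp : ∀ k, 0 ≤ coeff k p)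
    (hs : Summable fun k ↦ coeff k p * |t| ^ k) (n : ℕ) :
    HasSum (fun k ↦ coeff k (p ^ n) * t ^ k) ((∑' k, coeff k p * t ^ k) ^ n) := by
  induction n generalizing t with
  | zero =>
    rw [pow_zero, pow_zero]
    simpa using hasSum_single (f := fun k ↦ coeff k (1 : ℝ⟦X⟧) * t ^ k) 0 fun k hk ↦ by
      simp [coeff_one, hk]
  | succ n ih =>
    have hpn : Summable fun k ↦ coeff k (p ^ n) * |t| ^ k :=
      (ih (t := |t|) (by simpa only [abs_abs] using hs)).summable
    rw [pow_succ, pow_succ, ← (ih hs).tsum_eq]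
    exact hasSum_coeff_mul_mul_pow
      (summable_norm_coeff_mul_pow (coeff_pow_nonneg hp n) hpn) (summable_norm_coeff_mul_pow hp hs)

lemma summable_mul_coeff_pow_mul_pow {α : ℕ → ℝ} (hp : ∀ k, 0 ≤ coeff k p)
    (hs : Summable fun k ↦ coeff k p * |t| ^ k)
    (hα : Summable fun n ↦ |α n| * (∑' k, coeff k p * |t| ^ k) ^ n) :
    Summable fun nk : ℕ × ℕ ↦ α nk.1 * coeff nk.2 (p ^ nk.1) * t ^ nk.2 := by
  set f : ℕ × ℕ → ℝ := fun nk ↦ α nk.1 * coeff nk.2 (p ^ nk.1) * t ^ nk.2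
  have hs' : Summable fun k ↦ coeff k p * |(|t|)| ^ k := by simpa only [abs_abs] using hs
  have row_norm (n : ℕ) : HasSum (fun k ↦ ‖f (n, k)‖)
      (|α n| * (∑' k, coeff k p * |t| ^ k) ^ n) := by
    have norm_f (k : ℕ) : ‖f (n, k)‖ = |α n| * (coeff k (p ^ n) * |t| ^ k) := by
      simp only [f, norm_mul, norm_pow, Real.norm_eq_abs,
        abs_of_nonneg (coeff_pow_nonneg hp _ _), mul_assoc]
    simpa only [norm_f] using (hasSum_coeff_pow_mul_pow hp hs' n).mul_left |α n|
  refine Summable.of_norm ((summable_prod_of_nonneg fun _ ↦ norm_nonneg _).mpr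
    ⟨fun n ↦ (row_norm n).summable, ?_⟩)
  simpa only [(row_norm _).tsum_eq] using hα

lemma summable_mul_coeff_pow {α : ℕ → ℝ} (hp : ∀ k, 0 ≤ coeff k p)
    (hs : Summable fun k ↦ coeff k p * |t| ^ k)
    (hα : Summable fun n ↦ |α n| * (∑' k, coeff k p * |t| ^ k) ^ n) (ht : t ≠ 0) (k : ℕ) :
    Summable fun n ↦ α n * coeff k (p ^ n) := by
  rw [← summable_mul_right_iff (pow_ne_zero k ht)]
  exact (summable_mul_coeff_pow_mul_pow hp hs hα).comp_injective fun _ _ h ↦ (Prod.mk.inj h).1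

theorem hasSum_tsum_mul_coeff_pow_mul_pow {α : ℕ → ℝ} (hp : ∀ k, 0 ≤ coeff k p)
    (hs : Summable fun k ↦ coeff k p * |t| ^ k)
    (hα : Summable fun n ↦ |α n| * (∑' k, coeff k p * |t| ^ k) ^ n) :
    HasSum (fun k ↦ (∑' n, α n * coeff k (p ^ n)) * t ^ k)
      (∑' n, α n * (∑' k, coeff k p * t ^ k) ^ n) := by
  set f : ℕ × ℕ → ℝ := fun nk ↦ α nk.1 * coeff nk.2 (p ^ nk.1) * t ^ nk.2
  have hf : Summable f := summable_mul_coeff_pow_mul_pow hp hs hα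
  have row (n : ℕ) : HasSum (fun k ↦ f (n, k)) (α n * (∑' k, coeff k p * t ^ k) ^ n) := by
    simpa only [f, mul_assoc] using (hasSum_coeff_pow_mul_pow hp hs n).mul_left (α n)
  have column (k : ℕ) : HasSum (fun n ↦ f (n, k)) ((∑' n, α n * coeff k (p ^ n)) * t ^ k) := by
    rw [← tsum_mul_right]
    exact (hf.comp_injective fun _ _ h ↦ (Prod.mk.inj h).1).hasSum
  rw [(hf.hasSum.prod_fiberwise row).tsum_eq]
  exact ((Equiv.prodComm ℕ ℕ).hasSum_iff.mpr hf.hasSum).prod_fiberwise column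

lemma tsum_mul_coeff_pow_pos {α : ℕ → ℝ} (hp : ∀ k, 0 ≤ coeff k p) (hp₀ : constantCoeff p = 0)
    (hp₁ : 0 < coeff 1 p) (hα : ∀ n, 0 < α (n + 1)) {k : ℕ} (hk : k ≠ 0)
    (hsum : Summable fun n ↦ α n * coeff k (p ^ n)) :
    0 < ∑' n, α n * coeff k (p ^ n) := by
  refine hsum.tsum_pos (fun n ↦ ?_) k ?_
  · cases n with
    | zero => simp [coeff_one, hk]
    | succ n => exact mul_nonneg (hα n).le (coeff_pow_nonneg hp _ _)
  · obtain ⟨k, rfl⟩ := Nat.exists_eq_succ_of_ne_zero hk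
    rw [coeff_self_pow_of_constantCoeff_eq_zero hp₀]
    exact mul_pos (hα k) (pow_pos hp₁ _)

end PowerSeries

lemma hasSum_multichoose_half_mul_pow {x : ℝ} (hx : |x| < 1) :
    HasSum (fun n ↦ Ring.multichoose (1 / 2 : ℝ) n * x ^ n) (1 / √(1 - x)) := by
  have h := (one_div_one_sub_rpow_hasFPowerSeriesOnBall_zero (1 / 2)).hasSum (y := x) (by
    simpa [enorm_eq_nnnorm, ← NNReal.coe_lt_one] using hx)
  simp only [Ring.multichoose_eq, Real.sqrt_eq_rpow]
  simpa [mul_comm] using h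

lemma Ring.multichoose_pos {R : Type*} [Field R] [LinearOrder R] [IsStrictOrderedRing R] {r : R}
    (hr : 0 < r) (n : ℕ) : 0 < Ring.multichoose r n := by
  have h := Ring.factorial_nsmul_multichoose_eq_ascPochhammer r n
  rw [Polynomial.ascPochhammer_smeval_eq_eval, nsmul_eq_mul] at h
  have := ascPochhammer_pos n r hr
  rw [← h] at this
  exact pos_of_mul_pos_right this (by positivity)

lemma abs_le_abs_of_mem_uIcc_zero {α : Type*} [AddCommGroup α] [LinearOrder α]
    [IsOrderedAddMonoid α] {s t : α} (hs : s ∈ uIcc 0 t) : |s| ≤ |t| := by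
  simpa using abs_sub_left_of_mem_uIcc hs

lemma integral_one_div_sqrt_one_sub_sq {t : ℝ} (ht : |t| < 1) :
    ∫ s in 0..t, 1 / √(1 - s ^ 2) = arcsin t := by
  have hs {s : ℝ} (hs : s ∈ uIcc 0 t) : s ^ 2 < 1 := by
    have := abs_le_abs_of_mem_uIcc_zero hs
    nlinarith [abs_nonneg s, sq_abs s]
  have deriv (s : ℝ) (h : s ∈ uIcc 0 t) : HasDerivAt arcsin (1 / √(1 - s ^ 2)) s := by
    have := hs h
    exact hasDerivAt_arcsin (by nlinarith) (by nlinarith)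
  have cont : ContinuousOn (fun s : ℝ ↦ 1 / √(1 - s ^ 2)) (uIcc 0 t) :=
    continuousOn_const.div (by fun_prop) fun s h ↦ by have := hs h; positivity
  rw [integral_eq_sub_of_hasDerivAt deriv cont.intervalIntegrable, arcsin_zero, sub_zero]

lemma hasSum_arcsin {t : ℝ} (ht : |t| < 1) :
    HasSum (fun m : ℕ ↦ Ring.multichoose (1 / 2 : ℝ) m * t ^ (2 * m + 1) / (2 * m + 1))
      (arcsin t) := by
  have series {s : ℝ} (hs : |s| ≤ |t|) :
      HasSum (fun m ↦ Ring.multichoose (1 / 2 : ℝ) m * s ^ (2 * m)) (1 / √(1 - s ^ 2)) := by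
    simpa only [pow_mul] using hasSum_multichoose_half_mul_pow (x := s ^ 2) (by
      rw [abs_pow, sq_lt_one_iff_abs_lt_one, abs_abs]; exact hs.trans_lt ht)
  have h := hasSum_integral_of_dominated_convergence (μ := MeasureTheory.volume)
    (F := fun m s ↦ Ring.multichoose (1 / 2 : ℝ) m * s ^ (2 * m)) (f := fun s ↦ 1 / √(1 - s ^ 2))
    (fun m _ ↦ Ring.multichoose (1 / 2 : ℝ) m * |t| ^ (2 * m)) (fun m ↦ by fun_prop)
    (fun m ↦ .of_forall fun s hs ↦ ?_)
    (.of_forall fun s _ ↦ (series (abs_abs t).le).summable)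
    intervalIntegrable_const
    (.of_forall fun s hs ↦ series (abs_le_abs_of_mem_uIcc_zero (uIoc_subset_uIcc hs)))
  · rw [integral_one_div_sqrt_one_sub_sq ht] at h
    have moment (m : ℕ) : ∫ s in 0..t, Ring.multichoose (1 / 2 : ℝ) m * s ^ (2 * m) =
        Ring.multichoose (1 / 2 : ℝ) m * t ^ (2 * m + 1) / (2 * m + 1) := by
      rw [integral_const_mul, integral_pow]
      push_cast
      ring
    simpa only [moment] using h
  · rw [norm_mul, norm_pow, Real.norm_eq_abs, Real.norm_eq_abs,
      abs_of_pos (Ring.multichoose_pos one_half_pos m)]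
    have := abs_le_abs_of_mem_uIcc_zero (uIoc_subset_uIcc hs)
    gcongr
    exact (Ring.multichoose_pos one_half_pos m).le

noncomputable def logDivSubCoeff (a c : ℝ) : ℕ → ℝ
  | 0 => log (a / c)
  | n + 1 => 1 / ((n + 1) * c ^ (n + 1))

lemma hasSum_logDivSubCoeff_mul_pow {a c y : ℝ} (ha : 0 < a) (hy : |y| < c) :
    HasSum (fun n ↦ logDivSubCoeff a c n * y ^ n) (log (a / (c - y))) := by
  have hc : 0 < c := (abs_nonneg y).trans_lt hy
  have hcy : 0 < c - y := by linarith [le_abs_self y]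
  rw [← hasSum_nat_add_iff' 1]
  have h := hasSum_pow_div_log_of_abs_lt_one (x := y / c) (by
    rwa [abs_div, abs_of_pos hc, div_lt_one hc])
  have e : log (a / (c - y)) - ∑ i ∈ range 1, logDivSubCoeff a c i * y ^ i =
      -log (1 - y / c) := by
    rw [sum_range_one, logDivSubCoeff, pow_zero, mul_one, one_sub_div hc.ne',
      log_div ha.ne' hcy.ne', log_div ha.ne' hc.ne', log_div hcy.ne' hc.ne']
    ring
  have term (n : ℕ) : logDivSubCoeff a c (n + 1) * y ^ (n + 1) = (y / c) ^ (n + 1) / (n + 1) := by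
    simp only [logDivSubCoeff, div_pow]
    field_simp
  simpa only [e, term] using h

lemma logDivSubCoeff_succ_pos (a : ℝ) {c : ℝ} (hc : 0 < c) (n : ℕ) :
    0 < logDivSubCoeff a c (n + 1) := by
  rw [logDivSubCoeff]
  positivity

lemma summable_abs_logDivSubCoeff_mul_pow {a c s : ℝ} (ha : 0 < a) (hs₀ : 0 ≤ s) (hs : s < c) :
    Summable fun n ↦ |logDivSubCoeff a c n| * s ^ n := by
  have h := (hasSum_logDivSubCoeff_mul_pow ha ((abs_of_nonneg hs₀).trans_lt hs)).summable
  rw [← summable_nat_add_iff 1] at h ⊢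
  simpa only [abs_of_pos (logDivSubCoeff_succ_pos a (hs₀.trans_lt hs) _)] using h

noncomputable def arcsinSeries : ℝ⟦X⟧ :=
  mk fun k ↦ if Odd k then Ring.multichoose (1 / 2 : ℝ) (k / 2) / k else 0

lemma coeff_arcsinSeries_nonneg (k : ℕ) : 0 ≤ coeff k arcsinSeries := by
  rw [arcsinSeries, coeff_mk]
  split_ifs
  exacts [div_nonneg (Ring.multichoose_pos one_half_pos _).le k.cast_nonneg, le_rfl]

lemma constantCoeff_arcsinSeries : constantCoeff arcsinSeries = 0 := by
  simp [arcsinSeries]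

lemma coeff_one_arcsinSeries : coeff 1 arcsinSeries = 1 := by
  simp [arcsinSeries]

lemma hasSum_coeff_arcsinSeries_mul_pow {t : ℝ} (ht : |t| < 1) :
    HasSum (fun k ↦ coeff k arcsinSeries * t ^ k) (arcsin t) := by
  have odd_inj : Function.Injective fun m : ℕ ↦ 2 * m + 1 := fun _ _ h ↦ by simp_all
  have even_eq_zero (k : ℕ) (hk : k ∉ range fun m ↦ 2 * m + 1) :
      coeff k arcsinSeries * t ^ k = 0 := by
    have : ¬Odd k := fun ⟨m, hm⟩ ↦ hk ⟨m, hm.symm⟩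
    simp [arcsinSeries, this]
  have odd_eq (m : ℕ) : coeff (2 * m + 1) arcsinSeries * t ^ (2 * m + 1) =
      Ring.multichoose (1 / 2 : ℝ) m * t ^ (2 * m + 1) / (2 * m + 1) := by
    have hm : (2 * m + 1) / 2 = m := by omega
    simp only [arcsinSeries, coeff_mk, odd_two_mul_add_one, if_true, hm]
    push_cast
    ring
  rw [← odd_inj.hasSum_iff even_eq_zero]
  simpa only [Function.comp_def, odd_eq] using hasSum_arcsin ht

/-- For `ε ∈ (0,1)`, the function `F(t) = log(π/(ε + arccos t))` has a power
series expansion on `(-1,1)` in which every coefficient `a_k` with `k ≥ 1` is strictly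
positive. -/
theorem geodesic_log_pos_coeffs (ε : ℝ) (hε : ε ∈ Set.Ioo (0 : ℝ) 1) :
    ∃ a : ℕ → ℝ, (∀ k : ℕ, 1 ≤ k → 0 < a k) ∧
      ∀ t : ℝ, |t| < 1 →
        HasSum (fun k : ℕ => a k * t ^ k)
          (Real.log (Real.pi / (ε + Real.arccos t))) := by
  set c := ε + π / 2 with hc
  have pi_div_two_lt : π / 2 < c := by linarith [hε.1, hc]
  have c_pos : 0 < c := pi_div_two_pos.trans pi_div_two_lt
  have arcsin_lt (s : ℝ) : |arcsin s| < c :=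
    (abs_le.mpr ⟨neg_pi_div_two_le_arcsin s, arcsin_le_pi_div_two s⟩).trans_lt pi_div_two_lt
  have summable_arcsinSeries {t : ℝ} (ht : |t| < 1) :
      Summable fun k ↦ coeff k arcsinSeries * |t| ^ k :=
    (hasSum_coeff_arcsinSeries_mul_pow (by rwa [abs_abs])).summable
  have summable_logDivSubCoeff {t : ℝ} (ht : |t| < 1) : Summable fun n ↦
      |logDivSubCoeff π c n| * (∑' k, coeff k arcsinSeries * |t| ^ k) ^ n := by
    rw [(hasSum_coeff_arcsinSeries_mul_pow (by rwa [abs_abs])).tsum_eq]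
    exact summable_abs_logDivSubCoeff_mul_pow pi_pos (arcsin_nonneg.mpr (abs_nonneg t))
      (le_abs_self _ |>.trans_lt (arcsin_lt _))
  refine ⟨fun k ↦ ∑' n, logDivSubCoeff π c n * coeff k (arcsinSeries ^ n),
    fun k hk ↦ ?_, fun t ht ↦ ?_⟩
  · have half : |(1 / 2 : ℝ)| < 1 := by norm_num [abs_of_pos]
    refine tsum_mul_coeff_pow_pos coeff_arcsinSeries_nonneg constantCoeff_arcsinSeries
      (coeff_one_arcsinSeries ▸ one_pos) (logDivSubCoeff_succ_pos π c_pos) (by omega) ?_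
    exact summable_mul_coeff_pow coeff_arcsinSeries_nonneg (summable_arcsinSeries half)
      (summable_logDivSubCoeff half) one_half_pos.ne' k
  · have h := hasSum_tsum_mul_coeff_pow_mul_pow coeff_arcsinSeries_nonneg
      (summable_arcsinSeries ht) (summable_logDivSubCoeff ht)
    rw [(hasSum_coeff_arcsinSeries_mul_pow ht).tsum_eq,
      (hasSum_logDivSubCoeff_mul_pow pi_pos (arcsin_lt t)).tsum_eq] at h
    rwa [arccos_eq_pi_div_two_sub_arcsin, ← add_sub_assoc]
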